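/- Every space that is a union of fewer than 𝔡 compact subspaces belongs to Ufin(O,Γ)→Sfin(O,O): if X is a union of fewer than 𝔡 compact subspaces, then for every space Y with the Hurewicz property, the product X×Y has Menger's property. -/

import Mathlib

open Set Filter Cardinal

/-! Basic framework: classes of topological spaces and selection principles. -/

/-- A class (property) of topological spaces. -/
def SpaceClass : Type 1 := (X : Type) → TopologicalSpace X → Prop

/-- The subspace topology on a subset. -/
def subspaceTop {X : Type} (t : TopologicalSpace X) (S : Set X) : TopologicalSpace ↥S :=
  @instTopologicalSpaceSubtype X (· ∈ S) t

/-- A subset `S` of `X`, viewed as a subspace, belongs to the class `P`. -/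
def memSub (P : SpaceClass) {X : Type} (t : TopologicalSpace X) (S : Set X) : Prop :=
  P ↥S (subspaceTop t S)

/-- The product topology, with explicit topologies. -/
def prodTop {X Y : Type} (t : TopologicalSpace X) (s : TopologicalSpace Y) :
    TopologicalSpace (X × Y) :=
  @instTopologicalSpaceProd X Y t s

/-- A countable open cover of `X` (not containing `X` itself as a member). -/
def IsCountableOpenCover {X : Type} [TopologicalSpace X] (𝒰 : Set (Set X)) : Prop :=
  𝒰.Countable ∧ (∀ U ∈ 𝒰, IsOpen U) ∧ ⋃₀ 𝒰 = Set.univ ∧ Set.univ ∉ 𝒰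

/-- The cover `𝒰` contains a finite subcover. -/
def ContainsFinSubcover {X : Type} [TopologicalSpace X] (𝒰 : Set (Set X)) : Prop :=
  ∃ ℱ : Set (Set X), ℱ ⊆ 𝒰 ∧ ℱ.Finite ∧ ⋃₀ ℱ = Set.univ

/-- Rothberger's property `S1(O,O)`. -/
def IsRothberger (X : Type) [TopologicalSpace X] : Prop :=
  ∀ 𝒰 : ℕ → Set (Set X), (∀ n, IsCountableOpenCover (𝒰 n)) →
    ∃ V : ℕ → Set X, (∀ n, V n ∈ 𝒰 n) ∧ ⋃ n, V n = Set.univ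

/-- Hurewicz's property `Ufin(O,Γ)`. -/
def IsHurewicz (X : Type) [TopologicalSpace X] : Prop :=
  ∀ 𝒰 : ℕ → Set (Set X), (∀ n, IsCountableOpenCover (𝒰 n)) →
    (∀ n, ¬ ContainsFinSubcover (𝒰 n)) →
    ∃ ℱ : ℕ → Set (Set X), (∀ n, ℱ n ⊆ 𝒰 n) ∧ (∀ n, (ℱ n).Finite) ∧
      ∀ x : X, ∀ᶠ n in atTop, x ∈ ⋃₀ (ℱ n)

/-- Menger's property `Sfin(O,O)`. -/
def IsMenger (X : Type) [TopologicalSpace X] : Prop :=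
  ∀ 𝒰 : ℕ → Set (Set X), (∀ n, IsCountableOpenCover (𝒰 n)) →
    ∃ ℱ : ℕ → Set (Set X), (∀ n, ℱ n ⊆ 𝒰 n) ∧ (∀ n, (ℱ n).Finite) ∧
      ⋃ n, ⋃₀ (ℱ n) = Set.univ

/-- The Gerlits–Nagy property: Hurewicz and Rothberger. -/
def IsGerlitsNagy (X : Type) [TopologicalSpace X] : Prop :=
  IsHurewicz X ∧ IsRothberger X

/-- A countable open ω-cover: `X` itself is not a member, and every finite subset of `X`
is contained in some member. -/
def IsOmegaCover {X : Type} [TopologicalSpace X] (𝒰 : Set (Set X)) : Prop :=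
  𝒰.Countable ∧ (∀ U ∈ 𝒰, IsOpen U) ∧ Set.univ ∉ 𝒰 ∧
    ∀ F : Set X, F.Finite → ∃ U ∈ 𝒰, F ⊆ U

/-- A γ-cover: an infinite family, not containing `X`, such that every point of `X`
belongs to all but finitely many members. -/
def IsGammaCover {X : Type} [TopologicalSpace X] (𝒰 : Set (Set X)) : Prop :=
  𝒰.Infinite ∧ Set.univ ∉ 𝒰 ∧ ∀ x : X, {U ∈ 𝒰 | x ∉ U}.Finite

/-- The Gerlits–Nagy γ-property `S1(Ω,Γ)`. -/
def SatisfiesS1OmegaGamma (X : Type) [TopologicalSpace X] : Prop :=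
  ∀ 𝒰 : ℕ → Set (Set X), (∀ n, IsOmegaCover (𝒰 n)) →
    ∃ V : ℕ → Set X, (∀ n, V n ∈ 𝒰 n) ∧ IsGammaCover (range V)

/-! Cardinal characteristics of the continuum. -/

/-- `cov(M)`: the least cardinality of a family of meager subsets of `ℝ` covering `ℝ`. -/
noncomputable def covMeager : Cardinal :=
  sInf { c | ∃ 𝒜 : Set (Set ℝ), #𝒜 = c ∧ (∀ A ∈ 𝒜, IsMeagre A) ∧ ⋃₀ 𝒜 = Set.univ }

/-- `add(M)`: the least cardinality of a family of meager subsets of `ℝ` whose union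
is not meager. -/
noncomputable def addMeager : Cardinal :=
  sInf { c | ∃ 𝒜 : Set (Set ℝ), #𝒜 = c ∧ (∀ A ∈ 𝒜, IsMeagre A) ∧ ¬ IsMeagre (⋃₀ 𝒜) }

/-- `add(N)`: the least cardinality of a family of Lebesgue-null subsets of `ℝ` whose union
is not Lebesgue-null. -/
noncomputable def addNull : Cardinal :=
  sInf { c | ∃ 𝒜 : Set (Set ℝ), #𝒜 = c ∧ (∀ A ∈ 𝒜, MeasureTheory.volume A = 0) ∧
    MeasureTheory.volume (⋃₀ 𝒜) ≠ 0 }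

/-- The dominating number `𝔡`. -/
noncomputable def frakd : Cardinal :=
  sInf { c | ∃ D : Set (ℕ → ℕ), #D = c ∧
    ∀ g : ℕ → ℕ, ∃ f ∈ D, ∀ᶠ n in atTop, g n ≤ f n }

/-- The unbounding number `𝔟`. -/
noncomputable def frakb : Cardinal :=
  sInf { c | ∃ B : Set (ℕ → ℕ), #B = c ∧
    ∀ g : ℕ → ℕ, ∃ f ∈ B, ¬ (∀ᶠ n in atTop, f n ≤ g n) }

/-- A groupwise dense family: a family of infinite subsets of `ℕ`, closed under infinite
subsets, such that for every increasing `h` there is an infinite `I ⊆ ℕ` with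
`⋃ n ∈ I, [h n, h (n+1)) ` in the family. -/
def IsGroupwiseDense (G : Set (Set ℕ)) : Prop :=
  (∀ A ∈ G, A.Infinite) ∧ (∀ A ∈ G, ∀ B, B ⊆ A → B.Infinite → B ∈ G) ∧
  ∀ h : ℕ → ℕ, StrictMono h →
    ∃ I : Set ℕ, I.Infinite ∧ (⋃ n ∈ I, Ico (h n) (h (n + 1))) ∈ G

/-- The groupwise density number `𝔤`. -/
noncomputable def frakg : Cardinal :=
  sInf { c | ∃ 𝒢 : Set (Set (Set ℕ)), #𝒢 = c ∧ (∀ G ∈ 𝒢, IsGroupwiseDense G) ∧ ⋂₀ 𝒢 = ∅ }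

/-! Class operations: additivity, uniformity, productive classes. -/

def RothbergerClass : SpaceClass := fun X t => @IsRothberger X t
def HurewiczClass : SpaceClass := fun X t => @IsHurewicz X t
def MengerClass : SpaceClass := fun X t => @IsMenger X t
def GNClass : SpaceClass := fun X t => @IsGerlitsNagy X t
def GammaPropClass : SpaceClass := fun X t => @SatisfiesS1OmegaGamma X t

/-- `add(P,Q)`: the least cardinal `κ` such that some topological space is the union of
`κ` subspaces, each in `P`, while the union fails `Q`. -/
noncomputable def classAdd (P Q : SpaceClass) : Cardinal :=
  sInf { c | ∃ (X : Type) (t : TopologicalSpace X) (𝒮 : Set (Set X)),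
    #𝒮 = c ∧ ⋃₀ 𝒮 = Set.univ ∧ (∀ S ∈ 𝒮, memSub P t S) ∧ ¬ Q X t }

/-- `non(Q)`: the least cardinality of a space not in `Q`. -/
noncomputable def classNon (Q : SpaceClass) : Cardinal :=
  sInf { c | ∃ (X : Type) (t : TopologicalSpace X), #X = c ∧ ¬ Q X t }

/-- The class `P → Q` of spaces whose product with every member of `P` is in `Q`. -/
def ProductiveClass (P Q : SpaceClass) : SpaceClass := fun X t =>
  ∀ (Y : Type) (s : TopologicalSpace Y), P Y s → Q (X × Y) (prodTop t s)

/-- The class `P` is closed under homeomorphic images. -/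
def ClosedUnderHomeo (P : SpaceClass) : Prop :=
  ∀ (X Y : Type) (t : TopologicalSpace X) (s : TopologicalSpace Y),
    Nonempty (@Homeomorph X Y t s) → P X t → P Y s

/-- Every one-element space belongs to `P`. -/
def ContainsSingletons (P : SpaceClass) : Prop :=
  ∀ (X : Type) (t : TopologicalSpace X), (∃ x : X, ∀ y : X, y = x) → P X t

/-! Concentrated spaces and related hierarchies. -/

/-- A space is `λ`-concentrated if there is a countable `D ⊆ X` such that
`|X \ U| < λ` for every open `U ⊇ D`. -/
def IsLambdaConcentrated (lam : Cardinal) (X : Type) [TopologicalSpace X] : Prop :=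
  ∃ D : Set X, D.Countable ∧ ∀ U : Set X, IsOpen U → D ⊆ U → #↥(Uᶜ) < lam

/-- The space `X` is a union of fewer than `λ` compact subspaces (the class `K_λ`). -/
def IsKUnion (lam : Cardinal) (X : Type) [TopologicalSpace X] : Prop :=
  ∃ 𝒮 : Set (Set X), #𝒮 < lam ∧ (∀ S ∈ 𝒮, IsCompact S) ∧ ⋃₀ 𝒮 = Set.univ

/-- A σ-compact subset: a countable union of compact sets. -/
def IsSigmaCompactSet {X : Type} [TopologicalSpace X] (D : Set X) : Prop :=
  ∃ f : ℕ → Set X, (∀ n, IsCompact (f n)) ∧ D = ⋃ n, f n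

/-- A space is `K_λ`-concentrated if there is a σ-compact `D ⊆ X` such that
`X \ U ∈ K_λ` for every open `U ⊇ D`. -/
def IsKConcentrated (lam : Cardinal) (X : Type) [TopologicalSpace X] : Prop :=
  ∃ D : Set X, IsSigmaCompactSet D ∧ ∀ U : Set X, IsOpen U → D ⊆ U →
    IsKUnion lam ↥(Uᶜ)

/-- Successor step of the hierarchy `C_α(κ)`. -/
def CHierStep (kappa : Cardinal) (P : SpaceClass) : SpaceClass := fun X t =>
  @RegularSpace X t ∧
    ((∃ D : Set X, D.Countable ∧ ∀ U : Set X, @IsOpen X t U → D ⊆ U → memSub P t Uᶜ) ∨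
     (∃ 𝒮 : Set (Set X), #𝒮 < kappa.ord.cof ∧ ⋃₀ 𝒮 = Set.univ ∧ ∀ S ∈ 𝒮, memSub P t S))

/-- The hierarchy `C_α(κ)`: `C_0(κ)` is the class of regular spaces of cardinality `< κ`;
`C_{α+1}(κ)` consists of the regular spaces `C` such that either there is a countable
`D ⊆ C` with `C \ U ∈ C_α(κ)` for every open `U ⊇ D`, or `C` is a union of fewer than
`cf(κ)` members of `C_α(κ)`; at limits we take unions. -/
noncomputable def CHier (kappa : Cardinal) (α : Ordinal) : SpaceClass :=
  Ordinal.limitRecOn α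
    (fun X t => @RegularSpace X t ∧ #X < kappa)
    (fun _ P => CHierStep kappa P)
    (fun o _ ih => fun X t => ∃ β, ∃ h : β < o, ih β h X t)

/-- Successor step of the hierarchy `K_α(κ)`. -/
def KHierStep (kappa : Cardinal) (P : SpaceClass) : SpaceClass := fun X t =>
  @RegularSpace X t ∧
    ((∃ D : Set X, @IsSigmaCompactSet X t D ∧
        ∀ U : Set X, @IsOpen X t U → D ⊆ U → memSub P t Uᶜ) ∨
     (∃ 𝒮 : Set (Set X), #𝒮 < kappa.ord.cof ∧ ⋃₀ 𝒮 = Set.univ ∧ ∀ S ∈ 𝒮, memSub P t S))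

/-- The hierarchy `K_α(κ)`: `K_0(κ)` is the class of regular spaces that are unions of
fewer than `κ` compact subspaces; `K_{α+1}(κ)` consists of the regular spaces `C` such
that either there is a σ-compact `D ⊆ C` with `C \ U ∈ K_α(κ)` for every open `U ⊇ D`,
or `C` is a union of fewer than `cf(κ)` members of `K_α(κ)`; at limits we take unions. -/
noncomputable def KHier (kappa : Cardinal) (α : Ordinal) : SpaceClass :=
  Ordinal.limitRecOn α
    (fun X t => @RegularSpace X t ∧ @IsKUnion kappa X t)
    (fun _ P => KHierStep kappa P)
    (fun o _ ih => fun X t => ∃ β, ∃ h : β < o, ih β h X t)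

/-- The space embeds in a compact Hausdorff space. -/
def EmbedsInCompactHausdorff (X : Type) [TopologicalSpace X] : Prop :=
  ∃ (K : Type) (tK : TopologicalSpace K), @CompactSpace K tK ∧ @T2Space K tK ∧
    ∃ e : X → K, @Topology.IsEmbedding X K _ tK e

/-- Tychonoff space: completely regular and T1. -/
def IsTychonoff (X : Type) [TopologicalSpace X] : Prop :=
  T1Space X ∧ CompletelyRegularSpace X

/-! Each compact piece `K` of `X` yields, via the tube lemma, a monotone sequence of open covers
of `Y`; the Hurewicz property of `Y` turns it into a bound `f_K : ℕ → ℕ` such that for every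
`(x, y) ∈ K × Y`, eventually `(x, y)` lies in a member of index `≤ f_K n` of the `n`-th cover.
Fewer than `𝔡` such bounds do not dominate, so a single `g` exceeds each `f_K` infinitely often,
and the members of index `≤ g n` of the `n`-th covers together cover `X × Y`. -/

theorem exists_frequently_lt_of_mk_lt_frakd {ι : Type} (F : ι → ℕ → ℕ) (h : #ι < frakd) :
    ∃ g : ℕ → ℕ, ∀ i, ∃ᶠ n in atTop, F i n < g n := by
  by_contra! hdom
  have : frakd ≤ #(range F) :=
    csInf_le' ⟨range F, rfl, fun g => let ⟨i, hi⟩ := hdom g; ⟨F i, mem_range_self i, hi⟩⟩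
  exact (this.trans_lt (mk_range_le.trans_lt h)).false

theorem exists_sUnion_subset_of_monotone {ι α : Type*} [Preorder ι] [IsDirectedOrder ι]
    [Nonempty ι] {O : ι → Set α} (hO : Monotone O)
    {ℱ : Set (Set α)} (hfin : ℱ.Finite) (hsub : ℱ ⊆ range O) : ∃ k, ⋃₀ ℱ ⊆ O k := by
  have := hfin.to_subtype
  choose idx hidx using fun F : ℱ => hsub F.2
  obtain ⟨k, hk⟩ := hO.directed_le.finite_le idx
  exact ⟨k, sUnion_subset fun F hF => (hidx ⟨F, hF⟩).ge.trans (hk ⟨F, hF⟩)⟩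

theorem IsCompact.isOpen_setOf_prod_singleton_subset {X Y : Type*} [TopologicalSpace X]
    [TopologicalSpace Y] {K : Set X} (hK : IsCompact K) {V : Set (X × Y)} (hV : IsOpen V) :
    IsOpen {y | K ×ˢ {y} ⊆ V} := by
  refine isOpen_iff_forall_mem_open.2 fun y hy => ?_
  obtain ⟨u, v, -, hv, hKu, hyv, huv⟩ := generalized_tube_lemma hK isCompact_singleton hV hy
  exact ⟨v, fun y' hy' => (prod_mono hKu (singleton_subset_iff.2 hy')).trans huv, hv, hyv rfl⟩

theorem isMenger_of_forall_exists_iUnion_accumulate {Z : Type} [TopologicalSpace Z]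
    (h : ∀ U : ℕ → ℕ → Set Z, (∀ n m, IsOpen (U n m)) → (∀ n, ⋃ m, U n m = Set.univ) →
      ∃ g : ℕ → ℕ, ⋃ n, accumulate (U n) (g n) = Set.univ) :
    IsMenger Z := by
  intro 𝒰 h𝒰
  rcases isEmpty_or_nonempty Z with _ | _
  · exact ⟨fun _ => ∅, fun _ => empty_subset _, fun _ => finite_empty,
      eq_univ_of_forall isEmptyElim⟩
  · choose U hU using fun n => (h𝒰 n).1.exists_eq_range (.of_sUnion_eq_univ (h𝒰 n).2.2.1)
    have hUo : ∀ n m, IsOpen (U n m) := fun n m => (h𝒰 n).2.1 _ (hU n ▸ mem_range_self m)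
    have hUc : ∀ n, ⋃ m, U n m = Set.univ := fun n => by
      rw [← sUnion_range, ← hU n, (h𝒰 n).2.2.1]
    obtain ⟨g, hg⟩ := h U hUo hUc
    refine ⟨fun n => U n '' Iic (g n), fun n => hU n ▸ image_subset_range _ _,
      fun n => (finite_Iic (g n)).image _, ?_⟩
    simpa only [sUnion_image, accumulate, mem_Iic, iUnion_subtype] using hg

section Hurewicz

variable {Y : Type} [TopologicalSpace Y] {O : ℕ → ℕ → Set Y}

theorem IsHurewicz.exists_eventually_mem_of_monotone_of_ne_univ (hY : IsHurewicz Y)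
    (hO : ∀ n k, IsOpen (O n k)) (hmono : ∀ n, Monotone (O n))
    (hcov : ∀ n, ⋃ k, O n k = Set.univ)
    (hne : ∀ n k, O n k ≠ Set.univ) :
    ∃ f : ℕ → ℕ, ∀ y, ∀ᶠ n in atTop, y ∈ O n (f n) := by
  have hcover : ∀ n, IsCountableOpenCover (range (O n)) := fun n =>
    ⟨countable_range _, forall_mem_range.2 (hO n), by rw [sUnion_range, hcov n],
      fun ⟨k, hk⟩ => hne n k hk⟩
  have hnofin : ∀ n, ¬ ContainsFinSubcover (range (O n)) := by
    rintro n ⟨ℱ, hsub, hfin, huniv⟩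
    obtain ⟨k, hk⟩ := exists_sUnion_subset_of_monotone (hmono n) hfin hsub
    exact hne n k (univ_subset_iff.1 (huniv ▸ hk))
  obtain ⟨ℱ, hsub, hfin, hev⟩ := hY _ hcover hnofin
  choose f hf using fun n => exists_sUnion_subset_of_monotone (hmono n) (hfin n) (hsub n)
  exact ⟨f, fun y => (hev y).mono fun n hn => hf n hn⟩

theorem IsHurewicz.exists_eventually_mem_of_monotone (hY : IsHurewicz Y)
    (hO : ∀ n k, IsOpen (O n k)) (hmono : ∀ n, Monotone (O n))
    (hcov : ∀ n, ⋃ k, O n k = Set.univ) :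
    ∃ f : ℕ → ℕ, ∀ y, ∀ᶠ n in atTop, y ∈ O n (f n) := by
  classical
  by_cases hall : ∀ n, ∃ k, O n k = Set.univ
  · choose f hf using hall
    exact ⟨f, fun y => Eventually.of_forall fun n => hf n ▸ mem_univ y⟩
  push Not at hall
  obtain ⟨n₀, hn₀⟩ := hall
  -- The Hurewicz property only accepts covers without finite subcovers, so the covers having `Y`
  -- as a member (for which a bound is trivial) are replaced by the `n₀`-th one.
  let c : ℕ → ℕ := fun n => if ∃ k, O n k = Set.univ then n₀ else n
  have hc : ∀ n k, O (c n) k ≠ Set.univ := fun n => by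
    by_cases h : ∃ k, O n k = Set.univ
    · simpa only [c, if_pos h] using hn₀
    · simp only [c, if_neg h]
      exact fun k hk => h ⟨k, hk⟩
  obtain ⟨f, hf⟩ := hY.exists_eventually_mem_of_monotone_of_ne_univ (O := fun n => O (c n))
    (fun n => hO _) (fun n => hmono _) (fun n => hcov _) hc
  choose! k hk using fun n (h : ∃ k, O n k = Set.univ) => h
  refine ⟨fun n => if ∃ k, O n k = Set.univ then k n else f n,
    fun y => (hf y).mono fun n hn => ?_⟩
  by_cases h : ∃ k, O n k = Set.univ
  · simp only [if_pos h, hk n h, mem_univ]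
  · simpa only [c, if_neg h] using hn

end Hurewicz

theorem IsCompact.exists_eventually_prod_mem_accumulate {X Y : Type} [TopologicalSpace X]
    [TopologicalSpace Y] (hY : IsHurewicz Y) {K : Set X} (hK : IsCompact K)
    {U : ℕ → ℕ → Set (X × Y)} (hUo : ∀ n m, IsOpen (U n m)) (hUc : ∀ n, ⋃ m, U n m = Set.univ) :
    ∃ f : ℕ → ℕ, ∀ x ∈ K, ∀ y, ∀ᶠ n in atTop, (x, y) ∈ accumulate (U n) (f n) := by
  have hacc : ∀ n k, IsOpen (accumulate (U n) k) := fun n k =>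
    isOpen_biUnion fun m _ => hUo n m
  obtain ⟨f, hf⟩ := hY.exists_eventually_mem_of_monotone
    (O := fun n k => {y | K ×ˢ {y} ⊆ accumulate (U n) k})
    (fun n k => hK.isOpen_setOf_prod_singleton_subset (hacc n k))
    (fun n k k' hkk' y hy => hy.trans (monotone_accumulate hkk'))
    (fun n => eq_univ_of_forall fun y => mem_iUnion.2 <|
      (hK.prod isCompact_singleton).elim_directed_cover _ (hacc n)
        (by rw [iUnion_accumulate, hUc n]; exact subset_univ _) monotone_accumulate.directed_le)
  exact ⟨f, fun x hx y => (hf y).mono fun n hn => hn ⟨hx, rfl⟩⟩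

/-- Every space that is a union of fewer than `𝔡` compact subspaces belongs to
`Ufin(O,Γ) → Sfin(O,O)`: its product with every Hurewicz space is Menger. -/
theorem KUnion_productive_Hurewicz_Menger (X : Type) (tX : TopologicalSpace X)
    (hX : @IsKUnion frakd X tX) :
    ProductiveClass HurewiczClass MengerClass X tX := by
  intro Y tY hY
  obtain ⟨𝒮, h𝒮, hcpt, hcov⟩ := hX
  refine @isMenger_of_forall_exists_iUnion_accumulate _ (prodTop tX tY) fun U hUo hUc => ?_
  choose F hF using fun K : 𝒮 => (hcpt K K.2).exists_eventually_prod_mem_accumulate hY hUo hUc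
  obtain ⟨g, hg⟩ := exists_frequently_lt_of_mk_lt_frakd F h𝒮
  refine ⟨g, eq_univ_of_forall fun ⟨x, y⟩ => ?_⟩
  obtain ⟨K, hK, hxK⟩ := mem_sUnion.1 (hcov ▸ mem_univ x)
  obtain ⟨n, hlt, hn⟩ := ((hg ⟨K, hK⟩).and_eventually (hF ⟨K, hK⟩ x hxK y)).exists
  exact mem_iUnion.2 ⟨n, monotone_accumulate hlt.le hn⟩
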